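/- If sup({n : (n,α) ∈ 𝒯 for some α ∈ Γ} ∪ {0}) < +∞, then 𝖺(σ_{φ,𝔴}) = 0; in particular, if moreover σ_{φ,𝔴} is finite fibre, then ent_cset(σ_{φ,𝔴}) = 0. -/
import Mathlib


open Function Set

/-- The weighted generalized shift `σ_{φ,𝔴} : F^Γ → F^Γ`,
`σ_{φ,𝔴}((x_α)_α) = (𝔴_α x_{φ(α)})_α`. The unweighted shift `σ_φ` is `wshift φ 1`. -/
def wshift {F : Type*} [Field F] {Γ : Type*} (φ : Γ → Γ) (w : Γ → F) :
    (Γ → F) → (Γ → F) :=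
  fun x α => w α * x (φ α)
/-- `(n, α) ∈ 𝒯` iff `{φ^i(α) : 0 ≤ i ≤ n}` is an `(n+1)`-set and `∏_{0≤i≤n} 𝔴_{φ^i(α)} ≠ 0`. -/
def Tset {F : Type*} [Field F] {Γ : Type*} (φ : Γ → Γ) (w : Γ → F) (n : ℕ) (α : Γ) : Prop :=
  ((fun i : ℕ => φ^[i] α) '' Set.Iic n).ncard = n + 1 ∧
    ∏ i ∈ Finset.range (n + 1), w (φ^[i] α) ≠ 0
/-- `f` is finite fibre if every fibre `f⁻¹(y)` is finite. -/
def FiniteFibre {A : Type*} (f : A → A) : Prop := ∀ y : A, (f ⁻¹' {y}).Finite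
/-- An `f`-anti-orbit: a sequence with `f (a (n+1)) = a n` for all `n`. -/
def IsAntiOrbit {A : Type*} (f : A → A) (a : ℕ → A) : Prop := ∀ n : ℕ, f (a (n + 1)) = a n

/-- There exist `m` injective `f`-anti-orbits with pairwise disjoint ranges. -/
def HasDisjointAntiOrbits {A : Type*} (f : A → A) (m : ℕ) : Prop :=
  ∃ a : Fin m → ℕ → A, (∀ i, IsAntiOrbit f (a i) ∧ Function.Injective (a i)) ∧
    ∀ i j, i ≠ j → Disjoint (Set.range (a i)) (Set.range (a j))

/-- The infinite anti-orbit number `𝖺(f) ∈ ℕ ∪ {+∞}`. -/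
noncomputable def antiOrbitNumber {A : Type*} (f : A → A) : ℕ∞ :=
  sSup ({0} ∪ {m : ℕ∞ | ∃ k : ℕ, m = (k : ℕ∞) ∧ 1 ≤ k ∧ HasDisjointAntiOrbits f k})

/-- Contravariant set-theoretical entropy (for finite fibre `f`): `ent_cset f = 𝖺(f)`. -/
noncomputable def entCset {A : Type*} (f : A → A) : ℕ∞ := antiOrbitNumber f

lemma wshift_iterate {F : Type*} [Field F] {Γ : Type*} (φ : Γ → Γ) (w : Γ → F)
    (m : ℕ) (x : Γ → F) (α : Γ) :
    (wshift φ w)^[m] x α = (∏ i ∈ Finset.range m, w (φ^[i] α)) * x (φ^[m] α) := by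
  induction m generalizing x with
  | zero => simp
  | succ m ih =>
    rw [Function.iterate_succ_apply, ih, Finset.prod_range_succ,
      Function.iterate_succ_apply']
    simp only [wshift]
    ring

lemma anti_key {A : Type*} (f : A → A) (a : ℕ → A) (ha : IsAntiOrbit f a) (n m : ℕ) :
    f^[m] (a (n + m)) = a n := by
  induction m with
  | zero => simp
  | succ m ih =>
    rw [Function.iterate_succ_apply]
    have : f (a (n + m + 1)) = a (n + m) := ha (n + m)
    show f^[m] (f (a (n + m + 1))) = a n
    rw [this, ih]

lemma shift_anti_key {F : Type*} [Field F] {Γ : Type*} (φ : Γ → Γ) (w : Γ → F)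
    (a : ℕ → Γ → F) (ha : IsAntiOrbit (wshift φ w) a) (n m : ℕ) (α : Γ) :
    a n α = (∏ i ∈ Finset.range m, w (φ^[i] α)) * a (n + m) (φ^[m] α) := by
  conv_lhs => rw [← anti_key _ a ha n m, wshift_iterate]

lemma no_inj_antiorbit {F : Type*} [Field F] [Fintype F] {Γ : Type*} (φ : Γ → Γ) (w : Γ → F)
    (k : ℕ) (hk : ∀ (n : ℕ) (α : Γ), Tset φ w n α → n ≤ k)
    (a : ℕ → Γ → F) (ha : IsAntiOrbit (wshift φ w) a) : ¬ Function.Injective a := by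
  intro hinj
  set q := Fintype.card F with hq
  have hq2 : 2 ≤ q := Fintype.one_lt_card
  set N := Nat.factorial (k+1) * (q - 1) with hN
  have hNpos : 0 < N := Nat.mul_pos (Nat.factorial_pos _) (by omega)
  -- main claim: a is N-periodic
  have main : ∀ (n : ℕ) (α : Γ), a (n + N) α = a n α := by
    intro n α
    have hnT : ¬ Tset φ w (k+1) α := fun ht => by have := hk (k+1) α ht; omega
    rw [Tset, not_and_or] at hnT
    -- helper : if some weight along first k+2 orbit points vanishes
    rcases hnT with hc | hp
    · -- non-injective orbit case
      have hninj : ¬ Set.InjOn (fun i : ℕ => φ^[i] α) (Set.Iic (k+1)) := by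
        intro hI
        apply hc
        rw [Set.ncard_image_of_injOn hI, ← Finset.coe_Iic, Set.ncard_coe_finset,
          Nat.card_Iic]
      rw [Set.InjOn] at hninj
      push_neg at hninj
      obtain ⟨s0, hs0, t0, ht0, heq0, hne0⟩ := hninj
      simp only [Set.mem_Iic] at hs0 ht0
      -- wlog s < t
      have hmain : ∀ s t : ℕ, s < t → t ≤ k + 1 → φ^[s] α = φ^[t] α →
          a (n + N) α = a n α := by
        intro s t hst htk hφ
        set p := t - s with hpdef
        have hp1 : 1 ≤ p := by omega
        have hpk : p ≤ k + 1 := by omega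
        set β := φ^[s] α with hβdef
        have hβ : φ^[p] β = β := by
          rw [hβdef, ← Function.iterate_add_apply]
          have : p + s = t := by omega
          rw [this, ← hφ]
        set D := ∏ i ∈ Finset.range p, w (φ^[i] β) with hD
        have step : ∀ m, a m β = D * a (m + p) β := by
          intro m
          have := shift_anti_key φ w a ha m p β
          rwa [hβ] at this
        have iter : ∀ (j m : ℕ), a m β = D ^ j * a (m + j * p) β := by
          intro j
          induction j with
          | zero => intro m; simp
          | succ j ih =>
            intro m
            rw [ih m, step (m + j * p)]
            have : m + j * p + p = m + (j+1) * p := by ring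
            rw [this, pow_succ]
            ring
        -- p divides Nat.factorial (k+1)
        obtain ⟨c, hc'⟩ := Nat.dvd_factorial hp1 hpk
        by_cases hD0 : D = 0
        · have hzero : ∀ m, a m β = 0 := fun m => by rw [step m, hD0, zero_mul]
          rw [shift_anti_key φ w a ha n s α, shift_anti_key φ w a ha (n + N) s α,
            ← hβdef, hzero, hzero]
        · set j0 := (q - 1) * c with hj0
          have hDj : D ^ j0 = 1 := by
            rw [hj0, pow_mul, FiniteField.pow_card_sub_one_eq_one D hD0, one_pow]
          have hj0p : j0 * p = N := by
            rw [hj0, hN]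
            calc (q - 1) * c * p = (p * c) * (q - 1) := by ring
            _ = Nat.factorial (k+1) * (q-1) := by rw [← hc']
          have key2 : ∀ m, a (m + N) β = a m β := by
            intro m
            rw [iter j0 m, hDj, one_mul, Nat.mul_comm j0 p, Nat.mul_comm p j0, hj0p]
          rw [shift_anti_key φ w a ha n s α, shift_anti_key φ w a ha (n + N) s α, ← hβdef]
          have harith : n + N + s = (n + s) + N := by ring
          rw [harith, key2]
      rcases Nat.lt_or_ge s0 t0 with h1 | h1
      · exact hmain s0 t0 h1 ht0 heq0
      · have h2 : t0 < s0 := by omega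
        exact hmain t0 s0 h2 hs0 heq0.symm
    · -- vanishing product case
      push_neg at hp
      obtain ⟨i0, hi0mem, hi0⟩ := (Finset.prod_eq_zero_iff).mp hp
      have hzero : ∀ m, a m α = 0 := by
        intro m
        rw [shift_anti_key φ w a ha m (i0 + 1) α,
          Finset.prod_eq_zero (Finset.self_mem_range_succ i0) hi0, zero_mul]
      rw [hzero, hzero]
  have : a N = a 0 := by
    funext α
    have := main 0 α
    simpa using this
  have := hinj this
  omega

/-- If `sup({n : (n,α) ∈ 𝒯 for some α} ∪ {0}) < +∞`, then `𝖺(σ_{φ,𝔴}) = 0`; in particular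
if moreover `σ_{φ,𝔴}` is finite fibre then `ent_cset(σ_{φ,𝔴}) = 0`. -/
theorem stmt_9 {F : Type*} [Field F] [Fintype F] {Γ : Type*} [Nonempty Γ]
    (φ : Γ → Γ) (w : Γ → F)
    (h : ∃ k : ℕ, ∀ (n : ℕ) (α : Γ), Tset φ w n α → n ≤ k) :
    antiOrbitNumber (wshift φ w) = 0 ∧
    (FiniteFibre (wshift φ w) → entCset (wshift φ w) = 0) := by
  obtain ⟨k, hk⟩ := h
  have hno : ∀ m : ℕ, 1 ≤ m → ¬ HasDisjointAntiOrbits (wshift φ w) m := by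
    rintro m hm ⟨a, h1, _⟩
    obtain ⟨hao, hinj⟩ := h1 ⟨0, hm⟩
    exact no_inj_antiorbit φ w k hk _ hao hinj
  have hset : ({0} ∪ {m : ℕ∞ | ∃ k : ℕ, m = (k : ℕ∞) ∧ 1 ≤ k ∧
      HasDisjointAntiOrbits (wshift φ w) k}) = {(0 : ℕ∞)} := by
    ext m
    simp only [Set.mem_union, Set.mem_singleton_iff, Set.mem_setOf_eq]
    constructor
    · rintro (h | ⟨k', rfl, hk1, hd⟩)
      · exact h
      · exact absurd hd (hno k' hk1)
    · intro h; exact Or.inl h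
  have h0 : antiOrbitNumber (wshift φ w) = 0 := by
    rw [antiOrbitNumber, hset, csSup_singleton]
  exact ⟨h0, fun _ => h0⟩
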